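/- Let G be a connected finite simple graph that has an efficient dominating set S, and let H be a finite simple graph with an independent [1,2]-set of cardinality at most 2. Then the lexicographic product G∘H has an independent [1,2]-set and γ_{i[1,2]}(G∘H) = |S| · γ_{i[1,2]}(H). -/

import Mathlib

open SimpleGraph

/-- The lexicographic product of two simple graphs. -/
def SimpleGraph.lexProd {V W : Type*} (G : SimpleGraph V) (H : SimpleGraph W) :
    SimpleGraph (V × W) where
  Adj p q := G.Adj p.1 q.1 ∨ (p.1 = q.1 ∧ H.Adj p.2 q.2)
  symm := by
    constructor
    rintro p q (h | ⟨e, h⟩)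
    · exact Or.inl h.symm
    · exact Or.inr ⟨e.symm, h.symm⟩
  loopless := by
    constructor
    rintro p (h | ⟨_, h⟩)
    · exact G.ne_of_adj h rfl
    · exact H.ne_of_adj h rfl

/-- The `H`-layer of the product over a vertex `v` of `G`: all pairs with first
coordinate `v`. -/
def layer {V W : Type*} (v : V) : Set (V × W) := {p | p.1 = v}

/-- `S` is a `[1,k]`-set of `G`: every vertex outside `S` has at least `1` and at
most `k` neighbors in `S`. -/
def IsOneK {V : Type*} (G : SimpleGraph V) (k : ℕ) (S : Set V) : Prop :=
  ∀ v ∉ S, 1 ≤ (G.neighborSet v ∩ S).ncard ∧ (G.neighborSet v ∩ S).ncard ≤ k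

/-- `S` is a total `[1,k]`-set of `G`: every vertex has at least `1` and at most `k`
neighbors in `S`. -/
def IsTotalOneK {V : Type*} (G : SimpleGraph V) (k : ℕ) (S : Set V) : Prop :=
  ∀ v, 1 ≤ (G.neighborSet v ∩ S).ncard ∧ (G.neighborSet v ∩ S).ncard ≤ k

/-- `S` is an independent `[1,k]`-set of `G`. -/
def IsIndepOneK {V : Type*} (G : SimpleGraph V) (k : ℕ) (S : Set V) : Prop :=
  IsOneK G k S ∧ ∀ v ∈ S, ∀ w ∈ S, ¬ G.Adj v w

/-- `S` is `j`-dependent: every vertex of `S` has at most `j` neighbors in `S`. -/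
def IsJDep {V : Type*} (G : SimpleGraph V) (j : ℕ) (S : Set V) : Prop :=
  ∀ v ∈ S, (G.neighborSet v ∩ S).ncard ≤ j

/-- `S` is an efficient dominating set of `G`. -/
def IsEffDom {V : Type*} (G : SimpleGraph V) (S : Set V) : Prop :=
  (∀ v ∉ S, (G.neighborSet v ∩ S).ncard = 1) ∧ ∀ v ∈ S, (G.neighborSet v ∩ S).ncard = 0

/-- Membership in `SD^j_{[1,k]}(G)`: a `j`-dependent `[1,k]`-set such that every
vertex of `S` with no neighbor in `S` is at distance at least `3` from every other
vertex of `S`. -/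
def InSD {V : Type*} (G : SimpleGraph V) (k j : ℕ) (S : Set V) : Prop :=
  IsOneK G k S ∧ IsJDep G j S ∧
    ∀ v ∈ S, (G.neighborSet v ∩ S).ncard = 0 → ∀ v' ∈ S, v' ≠ v → 3 ≤ G.dist v v'

/-- The `[1,k]`-domination number `γ_{[1,k]}`. -/
noncomputable def gammaOneK {V : Type*} (G : SimpleGraph V) (k : ℕ) : ℕ :=
  sInf {n | ∃ S : Set V, IsOneK G k S ∧ S.ncard = n}

/-- The total `[1,k]`-domination number `γ_{t[1,k]}`. -/
noncomputable def gammaTotalOneK {V : Type*} (G : SimpleGraph V) (k : ℕ) : ℕ :=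
  sInf {n | ∃ S : Set V, IsTotalOneK G k S ∧ S.ncard = n}

/-- The `[1,k]`-independence number `γ_{i[1,k]}`. -/
noncomputable def gammaIndepOneK {V : Type*} (G : SimpleGraph V) (k : ℕ) : ℕ :=
  sInf {n | ∃ S : Set V, IsIndepOneK G k S ∧ S.ncard = n}

/-- `D` is a dominating set of `G`. -/
def IsDomSet {V : Type*} (G : SimpleGraph V) (D : Set V) : Prop :=
  ∀ v ∉ D, ∃ u ∈ D, G.Adj v u

/-- `D` is a total dominating set of `G`. -/
def IsTotalDomSet {V : Type*} (G : SimpleGraph V) (D : Set V) : Prop :=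
  ∀ v, ∃ u ∈ D, G.Adj v u

/-- The domination number `γ`. -/
noncomputable def gammaDom {V : Type*} (G : SimpleGraph V) : ℕ :=
  sInf {n | ∃ D : Set V, IsDomSet G D ∧ D.ncard = n}

/-- The total domination number `γ_t`. -/
noncomputable def gammaTotalDom {V : Type*} (G : SimpleGraph V) : ℕ :=
  sInf {n | ∃ D : Set V, IsTotalDomSet G D ∧ D.ncard = n}

/-!
If `T` is a minimum independent `[1,2]`-set of `H`, then `S ×ˢ T` is an independent `[1,2]`-set
of `G∘H`: a vertex outside the layers over `S` sees exactly the copy of `T` over its unique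
neighbour in `S`, and `|T| ≤ 2`. Conversely, let `D` be an independent `[1,2]`-set of `G∘H`.
Independence forbids vertices of `D` in layers adjacent to a layer meeting `D`, so every nonempty
slice `Prod.mk v ⁻¹' D` is an independent `[1,2]`-set of `H`. Since `D` dominates the layer over
`s ∈ S`, some vertex of the closed neighbourhood of `s` has a nonempty slice; the closed
neighbourhoods of an efficient dominating set are pairwise disjoint, so
`|D| ≥ |S| ⬝ γ_{i[1,2]}(H)`.
-/

section

variable {V W : Type*} {G : SimpleGraph V} {H : SimpleGraph W} {k : ℕ}

lemma gammaIndepOneK_le {T : Set V} (hT : IsIndepOneK G k T) : gammaIndepOneK G k ≤ T.ncard :=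
  Nat.sInf_le ⟨T, hT, rfl⟩

lemma exists_isIndepOneK_ncard_eq_gammaIndepOneK (h : ∃ T, IsIndepOneK G k T) :
    ∃ T, IsIndepOneK G k T ∧ T.ncard = gammaIndepOneK G k :=
  let ⟨T, hT⟩ := h
  Nat.sInf_mem (s := {n | ∃ T, IsIndepOneK G k T ∧ T.ncard = n}) ⟨_, T, hT, rfl⟩

lemma gammaIndepOneK_eq_zero_of_isEmpty [IsEmpty V] : gammaIndepOneK G k = 0 :=
  Nat.le_zero.mp <| (gammaIndepOneK_le (T := ∅) ⟨isEmptyElim, isEmptyElim⟩).trans_eq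
    (Set.ncard_empty V)

lemma ncard_eq_sum_ncard_preimage_mk [Fintype V] [Finite W] (D : Set (V × W)) :
    D.ncard = ∑ v, (Prod.mk v ⁻¹' D).ncard := by
  let e : D ≃ Σ v, (Prod.mk v ⁻¹' D : Set W) :=
    { toFun := fun p => ⟨p.1.1, p.1.2, p.2⟩
      invFun := fun q => ⟨(q.1, q.2.1), q.2.2⟩
      left_inv := fun _ => rfl
      right_inv := fun _ => rfl }
  simp only [← Nat.card_coe_set_eq, Nat.card_congr e, Nat.card_sigma]

namespace IsOneK

lemma exists_mem_eq_or_adj {D : Set V} (hD : IsOneK G k D) (v : V) :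
    ∃ u ∈ D, u = v ∨ G.Adj v u := by
  by_cases hv : v ∈ D
  · exact ⟨v, hv, Or.inl rfl⟩
  · obtain ⟨u, hvu, hu⟩ :=
      Set.nonempty_of_ncard_ne_zero (Nat.one_le_iff_ne_zero.mp (hD v hv).1)
    exact ⟨u, hu, Or.inr hvu⟩

lemma nonempty [Nonempty V] {D : Set V} (hD : IsOneK G k D) : D.Nonempty :=
  let ⟨u, hu, _⟩ := hD.exists_mem_eq_or_adj (Classical.arbitrary V)
  ⟨u, hu⟩

lemma exists_preimage_mk_nonempty_lexProd [Nonempty W] {D : Set (V × W)}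
    (hD : IsOneK (G.lexProd H) k D) (v : V) :
    ∃ u, (u = v ∨ G.Adj v u) ∧ (Prod.mk u ⁻¹' D).Nonempty := by
  obtain ⟨p, hp, hvp⟩ := hD.exists_mem_eq_or_adj (v, Classical.arbitrary W)
  refine ⟨p.1, ?_, p.2, hp⟩
  rcases hvp with rfl | hG | ⟨hv, -⟩
  exacts [Or.inl rfl, Or.inr hG, Or.inl hv.symm]

end IsOneK

namespace IsEffDom

variable [Finite V] {S : Set V}

lemma not_adj (hS : IsEffDom G S) {v w : V} (hv : v ∈ S) (hw : w ∈ S) : ¬ G.Adj v w := fun h =>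
  (((Set.ncard_eq_zero (Set.toFinite _)).mp (hS.2 v hv)).subset ⟨h, hw⟩ : w ∈ (∅ : Set V))

lemma eq_of_adj_of_adj (hS : IsEffDom G S) {v s s' : V} (hs : s ∈ S) (hs' : s' ∈ S)
    (h : G.Adj v s) (h' : G.Adj v s') : s = s' := by
  have hv : v ∉ S := fun hv => hS.not_adj hv hs h
  exact ((Set.ncard_le_one (Set.toFinite _)).mp (hS.1 v hv).le) s ⟨h, hs⟩ s' ⟨h', hs'⟩

lemma eq_of_eq_or_adj (hS : IsEffDom G S) {v s s' : V} (hs : s ∈ S) (hs' : s' ∈ S)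
    (h : v = s ∨ G.Adj s v) (h' : v = s' ∨ G.Adj s' v) : s = s' := by
  rcases h with rfl | h <;> rcases h' with rfl | h'
  · rfl
  · exact (hS.not_adj hs' hs h').elim
  · exact (hS.not_adj hs hs' h).elim
  · exact hS.eq_of_adj_of_adj hs hs' h.symm h'.symm

end IsEffDom

lemma lexProd_neighborSet_inter_of_forall_not_adj {D : Set (V × W)} {v : V} (h : W)
    (hD : ∀ p ∈ D, ¬ G.Adj v p.1) :
    (G.lexProd H).neighborSet (v, h) ∩ D =
      Prod.mk v '' (H.neighborSet h ∩ Prod.mk v ⁻¹' D) := by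
  ext ⟨u, w⟩
  constructor
  · rintro ⟨hG | ⟨rfl, hH⟩, hp⟩
    exacts [(hD _ hp hG).elim, ⟨w, ⟨hH, hp⟩, rfl⟩]
  · rintro ⟨w, ⟨hH, hp⟩, ⟨⟩⟩
    exact ⟨Or.inr ⟨rfl, hH⟩, hp⟩

lemma lexProd_neighborSet_inter_prod_of_notMem {S : Set V} {v : V} (hv : v ∉ S) (h : W)
    (T : Set W) :
    (G.lexProd H).neighborSet (v, h) ∩ S ×ˢ T = (G.neighborSet v ∩ S) ×ˢ T := by
  ext ⟨u, w⟩
  constructor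
  · rintro ⟨hG | ⟨rfl, -⟩, hu, hw⟩
    exacts [⟨⟨hG, hu⟩, hw⟩, (hv hu).elim]
  · rintro ⟨⟨hG, hu⟩, hw⟩
    exact ⟨Or.inl hG, hu, hw⟩

lemma IsIndepOneK.preimage_mk_lexProd {D : Set (V × W)} (hD : IsIndepOneK (G.lexProd H) k D)
    {v : V} (hv : (Prod.mk v ⁻¹' D).Nonempty) : IsIndepOneK H k (Prod.mk v ⁻¹' D) := by
  obtain ⟨w, hw⟩ := hv
  have hnadj : ∀ p ∈ D, ¬ G.Adj v p.1 := fun p hp hG => hD.2 _ hw p hp (Or.inl hG)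
  refine ⟨fun h hh => ?_, fun h hh h' hh' hH => hD.2 _ hh _ hh' (Or.inr ⟨rfl, hH⟩)⟩
  rw [← Set.ncard_image_of_injective _ (Prod.mk_right_injective v),
    ← lexProd_neighborSet_inter_of_forall_not_adj h hnadj]
  exact hD.1 _ hh

lemma isIndepOneK_lexProd_prod [Finite V] [Finite W] {S : Set V} {T : Set W}
    (hS : IsEffDom G S) (hT : IsIndepOneK H k T) (hTk : T.ncard ≤ k) :
    IsIndepOneK (G.lexProd H) k (S ×ˢ T) := by
  refine ⟨?_, ?_⟩
  · rintro ⟨v, h⟩ hvh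
    by_cases hv : v ∈ S
    · have hnadj : ∀ p ∈ S ×ˢ T, ¬ G.Adj v p.1 := fun p hp => hS.not_adj hv hp.1
      rw [lexProd_neighborSet_inter_of_forall_not_adj h hnadj,
        Set.ncard_image_of_injective _ (Prod.mk_right_injective v), Set.mk_preimage_prod_right hv]
      exact hT.1 h fun hh => hvh ⟨hv, hh⟩
    · have : Nonempty W := ⟨h⟩
      rw [lexProd_neighborSet_inter_prod_of_notMem hv, Set.ncard_prod, hS.1 v hv, one_mul]
      exact ⟨((Set.ncard_pos (Set.toFinite _)).mpr hT.1.nonempty), hTk⟩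
  · rintro ⟨v, h⟩ ⟨hv, hh⟩ ⟨v', h'⟩ ⟨hv', hh'⟩ (hG | ⟨-, hH⟩)
    exacts [hS.not_adj hv hv' hG, hT.2 h hh h' hh' hH]

lemma ncard_mul_gammaIndepOneK_le [Fintype V] [Finite W] {S : Set V} {D : Set (V × W)}
    (hS : IsEffDom G S) (hD : IsIndepOneK (G.lexProd H) k D) :
    S.ncard * gammaIndepOneK H k ≤ D.ncard := by
  classical
  cases isEmpty_or_nonempty W
  · simp [gammaIndepOneK_eq_zero_of_isEmpty]
  choose! g hg using hD.1.exists_preimage_mk_nonempty_lexProd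
  have hg_inj : Set.InjOn g S := fun s hs s' hs' hss' =>
    hS.eq_of_eq_or_adj hs hs' (hg s).1 (hss' ▸ (hg s').1)
  calc S.ncard * gammaIndepOneK H k
      = ∑ _s ∈ S.toFinset, gammaIndepOneK H k := by
        rw [Finset.sum_const, smul_eq_mul, Set.ncard_eq_toFinset_card']
    _ ≤ ∑ s ∈ S.toFinset, (Prod.mk (g s) ⁻¹' D).ncard :=
        Finset.sum_le_sum fun s _ => gammaIndepOneK_le (hD.preimage_mk_lexProd (hg s).2)
    _ = ∑ v ∈ S.toFinset.image g, (Prod.mk v ⁻¹' D).ncard :=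
        (Finset.sum_image (f := fun v => (Prod.mk v ⁻¹' D).ncard) fun s hs s' hs' =>
          hg_inj (Set.mem_toFinset.mp hs) (Set.mem_toFinset.mp hs')).symm
    _ ≤ ∑ v, (Prod.mk v ⁻¹' D).ncard := Finset.sum_le_sum_of_subset (Finset.subset_univ _)
    _ = D.ncard := (ncard_eq_sum_ncard_preimage_mk D).symm

end

theorem stmt18_general {V W : Type*} [Fintype V] [Fintype W] (G : SimpleGraph V)
    (H : SimpleGraph W)
    (S : Set V) (hS : IsEffDom G S)
    (hH : ∃ T : Set W, IsIndepOneK H 2 T ∧ T.ncard ≤ 2) :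
    (∃ D : Set (V × W), IsIndepOneK (G.lexProd H) 2 D) ∧
      gammaIndepOneK (G.lexProd H) 2 = S.ncard * gammaIndepOneK H 2 := by
  obtain ⟨T, hT, hT2⟩ := hH
  obtain ⟨T₀, hT₀, hT₀card⟩ := exists_isIndepOneK_ncard_eq_gammaIndepOneK ⟨T, hT⟩
  have hST₀ : IsIndepOneK (G.lexProd H) 2 (S ×ˢ T₀) :=
    isIndepOneK_lexProd_prod hS hT₀ (hT₀card ▸ (gammaIndepOneK_le hT).trans hT2)
  refine ⟨⟨_, hST₀⟩, le_antisymm ?_ ?_⟩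
  · calc gammaIndepOneK (G.lexProd H) 2 ≤ (S ×ˢ T₀).ncard := gammaIndepOneK_le hST₀
      _ = S.ncard * gammaIndepOneK H 2 := by rw [Set.ncard_prod, hT₀card]
  · obtain ⟨D, hD, hDcard⟩ := exists_isIndepOneK_ncard_eq_gammaIndepOneK ⟨_, hST₀⟩
    exact hDcard ▸ ncard_mul_gammaIndepOneK_le hS hD

/-- Let `G` be connected with an efficient dominating set `S`, and let
`H` have an independent `[1,2]`-set of cardinality at most `2`. Then `G∘H` has an
independent `[1,2]`-set and `γ_{i[1,2]}(G∘H) = |S| ⬝ γ_{i[1,2]}(H)`. -/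
theorem stmt18 {V W : Type*} [Fintype V] [Fintype W] (G : SimpleGraph V)
    (H : SimpleGraph W) (hconn : G.Connected)
    (S : Set V) (hS : IsEffDom G S)
    (hH : ∃ T : Set W, IsIndepOneK H 2 T ∧ T.ncard ≤ 2) :
    (∃ D : Set (V × W), IsIndepOneK (G.lexProd H) 2 D) ∧
      gammaIndepOneK (G.lexProd H) 2 = S.ncard * gammaIndepOneK H 2 :=
  stmt18_general G H S hS hH
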